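/- Fix integers 0 = s_1 < s_2 < ... < s_k, set S = {s_1,...,s_k} and s̄ = s_k. (i) Let n ≥ 2s̄, let T be a legal cover of L_n, and let S' ⊆ New(n) be such that T ∪ S' is a legal cover of L_{n+1}; then the left classification is unchanged: indeg_{T∪S'}(i) = indeg_T(i) for all 0 ≤ i < s̄, i.e., L^{T∪S'} = L^T. (ii) Moreover, let n_1, n_2 ≥ 2s̄, let T_1 be a legal cover of L_{n_1} and T_2 a legal cover of L_{n_2} with R^{T_1} = R^{T_2} (their left classifications L^{T_1}, L^{T_2} may differ), let S'' ⊆ S, and set E_m = {(m−s, m) : s ∈ S''} for m ∈ {n_1, n_2}; then T_1 ∪ E_{n_1} is a legal cover of L_{n_1+1} if and only if T_2 ∪ E_{n_2} is a legal cover of L_{n_2+1}, and in that case R^{T_1 ∪ E_{n_1}} = R^{T_2 ∪ E_{n_2}}. -/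

import Mathlib

/-- The number of edges of `T` ending at vertex `v`. -/
def indeg (T : Finset (ℕ × ℕ)) (v : ℕ) : ℕ := (T.filter fun e => e.2 = v).card

/-- The number of edges of `T` starting at vertex `v`. -/
def outdeg (T : Finset (ℕ × ℕ)) (v : ℕ) : ℕ := (T.filter fun e => e.1 = v).card

/-- Edge set of the directed circulant graph `C_n` with jump set `S`:
edges `(i,j)` with `i, j ∈ {0,…,n−1}` and `(j − i) mod n ∈ S`. -/
def ECirc (S : Finset ℕ) (n : ℕ) : Finset (ℕ × ℕ) :=
  (Finset.range n ×ˢ Finset.range n).filter fun e => (e.2 + n - e.1) % n ∈ S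

/-- Edge set of the lattice graph `L_n` with jump set `S`:
edges `(i,j)` with `i, j ∈ {0,…,n−1}` and `j − i ∈ S`. -/
def ELat (S : Finset ℕ) (n : ℕ) : Finset (ℕ × ℕ) :=
  (Finset.range n ×ˢ Finset.range n).filter fun e => e.1 ≤ e.2 ∧ e.2 - e.1 ∈ S

/-- `Hook(n) = E_C(n) \ E_L(n)`. -/
def Hook (S : Finset ℕ) (n : ℕ) : Finset (ℕ × ℕ) := ECirc S n \ ELat S n

/-- `New(n) = E_L(n+1) \ E_L(n)`. -/
def NewE (S : Finset ℕ) (n : ℕ) : Finset (ℕ × ℕ) := ELat S (n + 1) \ ELat S n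

/-- `T` is a cycle cover of `C_n`: `T ⊆ E_C(n)` and every vertex has in- and out-degree 1. -/
def CycleCover (S : Finset ℕ) (n : ℕ) (T : Finset (ℕ × ℕ)) : Prop :=
  T ⊆ ECirc S n ∧ ∀ v < n, indeg T v = 1 ∧ outdeg T v = 1

/-- `T` is a legal cover of `L_n` (with `L(n) = {0,…,s̄−1}`, `R(n) = {n−s̄,…,n−1}`):
all in/out-degrees are at most 1, vertices outside `L(n)` have in-degree 1, and
vertices outside `R(n)` have out-degree 1. -/
def LegalCover (S : Finset ℕ) (sbar n : ℕ) (T : Finset (ℕ × ℕ)) : Prop :=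
  T ⊆ ELat S n ∧ (∀ v < n, indeg T v ≤ 1 ∧ outdeg T v ≤ 1) ∧
    (∀ v < n, sbar ≤ v → indeg T v = 1) ∧
    (∀ v < n, v < n - sbar → outdeg T v = 1)

/-- The classification `C(T) = (L^T, R^T)` of a legal cover of `L_n`, as a pair of binary
`s̄`-tuples: `L^T(i)` records whether `indeg_T(i) = 1` and `R^T(i)` whether
`outdeg_T(n−1−i) = 1`. -/
def classif (sbar n : ℕ) (T : Finset (ℕ × ℕ)) :
    (Fin sbar → Bool) × (Fin sbar → Bool) :=
  (fun i => decide (indeg T i.val = 1), fun i => decide (outdeg T (n - 1 - i.val) = 1))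

/-!
Edges of `New(n)` all end at the new vertex `n`, which lies far from `L(n)`; this gives (i).
For (ii), adding `E_n` changes degrees only at `n` (in-degree `|S''|`) and at the vertices
`n - s`, `s ∈ S''`, all of which lie in `R(n) ∪ {n}`. So legality of `T ∪ E_n` and its right
classification are determined by the out-degrees `outdeg T (n - i)`, `i ≤ s̄`, which is exactly
the data recorded by `R^T`.
-/

open Finset

section Degrees

variable {S A : Finset ℕ} {sbar n : ℕ} {T E : Finset (ℕ × ℕ)}

lemma mem_ELat {e : ℕ × ℕ} :
    e ∈ ELat S n ↔ e.1 < n ∧ e.2 < n ∧ e.1 ≤ e.2 ∧ e.2 - e.1 ∈ S := by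
  simp only [ELat, mem_filter, mem_product, mem_range, and_assoc]

lemma snd_eq_of_mem_NewE {e : ℕ × ℕ} (he : e ∈ NewE S n) : e.2 = n := by
  rw [NewE, mem_sdiff, mem_ELat, mem_ELat] at he
  obtain ⟨⟨h1, h2, h3, h4⟩, hnot⟩ := he
  by_contra hne
  exact hnot ⟨by omega, by omega, h3, h4⟩

lemma indeg_union_of_forall_snd_ne {v : ℕ} (h : ∀ e ∈ E, e.2 ≠ v) :
    indeg (T ∪ E) v = indeg T v := by
  rw [indeg, indeg, filter_union, filter_false_of_mem h, union_empty]

lemma indeg_union_of_disjoint (h : Disjoint T E) (v : ℕ) :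
    indeg (T ∪ E) v = indeg T v + indeg E v := by
  rw [indeg, filter_union, card_union_of_disjoint (disjoint_filter_filter h)]
  rfl

lemma outdeg_union_of_disjoint (h : Disjoint T E) (v : ℕ) :
    outdeg (T ∪ E) v = outdeg T v + outdeg E v := by
  rw [outdeg, filter_union, card_union_of_disjoint (disjoint_filter_filter h)]
  rfl

lemma indeg_eq_zero_of_le (hT : T ⊆ ELat S n) {v : ℕ} (hv : n ≤ v) : indeg T v = 0 := by
  refine card_eq_zero.mpr (filter_false_of_mem fun e he => ?_)
  have := (mem_ELat.mp (hT he)).2.1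
  omega

lemma outdeg_eq_zero_of_le (hT : T ⊆ ELat S n) {v : ℕ} (hv : n ≤ v) : outdeg T v = 0 := by
  refine card_eq_zero.mpr (filter_false_of_mem fun e he => ?_)
  have := (mem_ELat.mp (hT he)).1
  omega

lemma disjoint_image_into (hT : T ⊆ ELat S n) (A : Finset ℕ) :
    Disjoint T (A.image fun s => (n - s, n)) := by
  refine disjoint_right.mpr fun e he heT => ?_
  obtain ⟨s, -, rfl⟩ := mem_image.mp he
  exact lt_irrefl n (mem_ELat.mp (hT heT)).2.1

lemma indeg_image_into (hA : ∀ s ∈ A, s ≤ n) (v : ℕ) :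
    indeg (A.image fun s => (n - s, n)) v = if v = n then #A else 0 := by
  split_ifs with hv
  · have hsnd : ∀ e ∈ A.image fun s => (n - s, n), e.2 = v := by
      simp only [mem_image]
      rintro _ ⟨s, -, rfl⟩
      exact hv.symm
    have hinj : Set.InjOn (fun s => (n - s, n)) A := by
      intro a ha b hb hab
      have := hA a ha
      have := hA b hb
      have := congrArg Prod.fst hab
      simp only at this
      omega
    rw [indeg, filter_true_of_mem hsnd, card_image_of_injOn hinj]
  · refine card_eq_zero.mpr (filter_false_of_mem fun e he => ?_)
    obtain ⟨s, -, rfl⟩ := mem_image.mp he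
    exact Ne.symm hv

lemma outdeg_image_into (hA : ∀ s ∈ A, s ≤ n) {i : ℕ} (hi : i ≤ n) :
    outdeg (A.image fun s => (n - s, n)) (n - i) = if i ∈ A then 1 else 0 := by
  have hfilter : A.filter (fun s => n - s = n - i) = A.filter (· = i) :=
    filter_congr fun s hs => by have := hA s hs; omega
  rw [outdeg, filter_image, hfilter, filter_eq']
  split_ifs <;> simp

lemma indeg_union_image (hT : T ⊆ ELat S n) (hA : ∀ s ∈ A, s ≤ n) (v : ℕ) :
    indeg (T ∪ A.image fun s => (n - s, n)) v = indeg T v + if v = n then #A else 0 := by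
  rw [indeg_union_of_disjoint (disjoint_image_into hT A), indeg_image_into hA]

lemma outdeg_union_image (hT : T ⊆ ELat S n) (hA : ∀ s ∈ A, s ≤ n) {i : ℕ} (hi : i ≤ n) :
    outdeg (T ∪ A.image fun s => (n - s, n)) (n - i) =
      outdeg T (n - i) + if i ∈ A then 1 else 0 := by
  rw [outdeg_union_of_disjoint (disjoint_image_into hT A), outdeg_image_into hA hi]

lemma union_image_subset_ELat (hT : T ⊆ ELat S n) (hAS : A ⊆ S) (hA : ∀ s ∈ A, s ≤ n) :
    T ∪ A.image (fun s => (n - s, n)) ⊆ ELat S (n + 1) := by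
  intro e he
  rcases mem_union.mp he with he | he
  · obtain ⟨h1, h2, h3, h4⟩ := mem_ELat.mp (hT he)
    exact mem_ELat.mpr ⟨by omega, by omega, h3, h4⟩
  · obtain ⟨s, hs, rfl⟩ := mem_image.mp he
    have hsn := hA s hs
    refine mem_ELat.mpr ⟨by omega, by omega, by omega, ?_⟩
    show n - (n - s) ∈ S
    rw [show n - (n - s) = s by omega]
    exact hAS hs

lemma classif_snd_union_image (hT : T ⊆ ELat S n) (hA : ∀ s ∈ A, s ≤ n) (hsbar : sbar ≤ n) :
    (classif sbar (n + 1) (T ∪ A.image fun s => (n - s, n))).2 =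
      fun i : Fin sbar => decide (outdeg T (n - i) + (if (i : ℕ) ∈ A then 1 else 0) = 1) := by
  funext i
  have hi : (i : ℕ) ≤ n := by omega
  simp only [classif, Nat.add_sub_cancel, outdeg_union_image hT hA hi]

end Degrees

section LegalCover

variable {S A : Finset ℕ} {sbar n : ℕ} {T : Finset (ℕ × ℕ)}

lemma LegalCover.indeg_le_one (hT : LegalCover S sbar n T) (v : ℕ) : indeg T v ≤ 1 := by
  rcases lt_or_ge v n with hv | hv
  · exact (hT.2.1 v hv).1
  · exact (indeg_eq_zero_of_le hT.1 hv).trans_le zero_le_one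

lemma LegalCover.outdeg_le_one (hT : LegalCover S sbar n T) (v : ℕ) : outdeg T v ≤ 1 := by
  rcases lt_or_ge v n with hv | hv
  · exact (hT.2.1 v hv).2
  · exact (outdeg_eq_zero_of_le hT.1 hv).trans_le zero_le_one

/-- `R^T(i - 1)` records `outdeg T (n - i)`, and `outdeg T n = 0`. -/
lemma LegalCover.outdeg_sub_eq_of_classif_snd_eq {n₁ n₂ : ℕ} {T₁ T₂ : Finset (ℕ × ℕ)}
    (hT₁ : LegalCover S sbar n₁ T₁) (hT₂ : LegalCover S sbar n₂ T₂)
    (h : (classif sbar n₁ T₁).2 = (classif sbar n₂ T₂).2) {i : ℕ} (hi : i ≤ sbar) :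
    outdeg T₁ (n₁ - i) = outdeg T₂ (n₂ - i) := by
  rcases Nat.eq_zero_or_pos i with rfl | hpos
  · rw [Nat.sub_zero, Nat.sub_zero, outdeg_eq_zero_of_le hT₁.1 le_rfl,
      outdeg_eq_zero_of_le hT₂.1 le_rfl]
  · have hbit := congrFun h ⟨i - 1, by omega⟩
    simp only [classif, decide_eq_decide, Nat.sub_sub, Nat.add_sub_cancel' hpos] at hbit
    have := hT₁.outdeg_le_one (n₁ - i)
    have := hT₂.outdeg_le_one (n₂ - i)
    omega

/-- With `f i = outdeg T (n - i)`: the new vertex `n` receives exactly one edge, which must start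
at a vertex of `T` without out-edge, and `n - s̄`, which leaves the right end, must get an
out-edge. -/
def ExtensionCondition (sbar : ℕ) (A : Finset ℕ) (f : ℕ → ℕ) : Prop :=
  #A = 1 ∧ (∀ i ∈ A, f i = 0) ∧ (sbar ∉ A → f sbar = 1)

lemma ExtensionCondition.congr {f g : ℕ → ℕ} (hA : ∀ i ∈ A, i ≤ sbar)
    (hfg : ∀ i ≤ sbar, f i = g i) :
    ExtensionCondition sbar A f ↔ ExtensionCondition sbar A g := by
  unfold ExtensionCondition
  rw [hfg sbar le_rfl]
  exact and_congr_right' (and_congr_left' (forall₂_congr fun i hi => by rw [hfg i (hA i hi)]))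

lemma LegalCover.extensionCondition (hT : LegalCover S sbar n T) (hsbar : sbar ≤ n)
    (hA : ∀ s ∈ A, s ≤ sbar)
    (hext : LegalCover S sbar (n + 1) (T ∪ A.image fun s => (n - s, n))) :
    ExtensionCondition sbar A fun i => outdeg T (n - i) := by
  have hAn : ∀ s ∈ A, s ≤ n := fun s hs => (hA s hs).trans hsbar
  obtain ⟨-, hle, hin, hout⟩ := hext
  refine ⟨?_, fun i hi => ?_, fun hnot => ?_⟩
  · have h := hin n n.lt_succ_self hsbar
    rwa [indeg_union_image hT.1 hAn, indeg_eq_zero_of_le hT.1 le_rfl, if_pos rfl,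
      zero_add] at h
  · show outdeg T (n - i) = 0
    have h := (hle (n - i) (by omega)).2
    rw [outdeg_union_image hT.1 hAn (hAn i hi), if_pos hi] at h
    omega
  · have h := hout (n - sbar) (by omega) (by omega)
    rwa [outdeg_union_image hT.1 hAn hsbar, if_neg hnot] at h

lemma LegalCover.union_image (hT : LegalCover S sbar n T) (hsbar : sbar ≤ n) (hAS : A ⊆ S)
    (hA : ∀ s ∈ A, s ≤ sbar) (hcond : ExtensionCondition sbar A fun i => outdeg T (n - i)) :
    LegalCover S sbar (n + 1) (T ∪ A.image fun s => (n - s, n)) := by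
  have hAn : ∀ s ∈ A, s ≤ n := fun s hs => (hA s hs).trans hsbar
  obtain ⟨hcard, hfree, hlast⟩ := hcond
  dsimp only at hfree hlast
  have hindeg : ∀ v < n + 1, indeg (T ∪ A.image fun s => (n - s, n)) v =
      if v = n then 1 else indeg T v := by
    intro v hv
    rw [indeg_union_image hT.1 hAn]
    split_ifs with hvn
    · rw [hvn, indeg_eq_zero_of_le hT.1 le_rfl, hcard]
    · rfl
  refine ⟨union_image_subset_ELat hT.1 hAS hAn, fun v hv => ⟨?_, ?_⟩, fun v hv hsv => ?_,
    fun v hv hvs => ?_⟩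
  · rw [hindeg v hv]
    split_ifs
    exacts [le_rfl, hT.indeg_le_one v]
  · obtain ⟨i, hi, rfl⟩ : ∃ i ≤ n, v = n - i := ⟨n - v, by omega, by omega⟩
    rw [outdeg_union_image hT.1 hAn hi]
    split_ifs with hiA
    · rw [hfree i hiA]
    · exact hT.outdeg_le_one _
  · rw [hindeg v hv]
    split_ifs with hvn
    · rfl
    · exact hT.2.2.1 v (by omega) hsv
  · obtain ⟨i, hi, rfl⟩ : ∃ i ≤ n, v = n - i := ⟨n - v, by omega, by omega⟩
    rw [outdeg_union_image hT.1 hAn hi]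
    rcases eq_or_lt_of_le (show sbar ≤ i by omega) with rfl | hlt
    · by_cases hiA : sbar ∈ A
      · rw [if_pos hiA, hfree sbar hiA]
      · rw [if_neg hiA, hlast hiA]
    · have hiA : i ∉ A := fun h => absurd (hA i h) (by omega)
      rw [if_neg hiA, hT.2.2.2 (n - i) (by omega) (by omega)]

lemma LegalCover.union_image_iff (hT : LegalCover S sbar n T) (hsbar : sbar ≤ n) (hAS : A ⊆ S)
    (hA : ∀ s ∈ A, s ≤ sbar) :
    LegalCover S sbar (n + 1) (T ∪ A.image fun s => (n - s, n)) ↔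
      ExtensionCondition sbar A fun i => outdeg T (n - i) :=
  ⟨hT.extensionCondition hsbar hA, hT.union_image hsbar hAS hA⟩

end LegalCover

/-- Adding New-edges does not change the left classification, and the effect on the right
classification depends only on the right classification.
(i) If `T` is a legal cover of `L_n` (`n ≥ 2s̄`) and `S' ⊆ New(n)` is such that `T ∪ S'`
is a legal cover of `L_{n+1}`, then `indeg_{T∪S'}(i) = indeg_T(i)` for all `i < s̄`, i.e.
`L^{T∪S'} = L^T`.
(ii) If `T_1, T_2` are legal covers of `L_{n_1}, L_{n_2}` (`n_1, n_2 ≥ 2s̄`) with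
`R^{T_1} = R^{T_2}`, and `S'' ⊆ S` with `E_m = {(m−s, m) : s ∈ S''}`, then
`T_1 ∪ E_{n_1}` is a legal cover of `L_{n_1+1}` iff `T_2 ∪ E_{n_2}` is a legal cover
of `L_{n_2+1}`, and in that case `R^{T_1 ∪ E_{n_1}} = R^{T_2 ∪ E_{n_2}}`. -/
theorem new_edges_left_classif_invariant (S : Finset ℕ) (h0 : 0 ∈ S) (sbar : ℕ)
    (hsbar : sbar = S.max' ⟨0, h0⟩) :
    (∀ n : ℕ, 2 * sbar ≤ n → ∀ T S' : Finset (ℕ × ℕ),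
      LegalCover S sbar n T → S' ⊆ NewE S n → LegalCover S sbar (n + 1) (T ∪ S') →
        ∀ i < sbar, indeg (T ∪ S') i = indeg T i) ∧
    (∀ n1 n2 : ℕ, 2 * sbar ≤ n1 → 2 * sbar ≤ n2 → ∀ T1 T2 : Finset (ℕ × ℕ),
      LegalCover S sbar n1 T1 → LegalCover S sbar n2 T2 →
      (classif sbar n1 T1).2 = (classif sbar n2 T2).2 →
      ∀ S'' : Finset ℕ, S'' ⊆ S →
        ((LegalCover S sbar (n1 + 1) (T1 ∪ S''.image fun s => (n1 - s, n1)) ↔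
            LegalCover S sbar (n2 + 1) (T2 ∪ S''.image fun s => (n2 - s, n2))) ∧
          (LegalCover S sbar (n1 + 1) (T1 ∪ S''.image fun s => (n1 - s, n1)) →
            (classif sbar (n1 + 1) (T1 ∪ S''.image fun s => (n1 - s, n1))).2 =
              (classif sbar (n2 + 1) (T2 ∪ S''.image fun s => (n2 - s, n2))).2))) := by
  have hmax : ∀ s ∈ S, s ≤ sbar := fun s hs => hsbar ▸ S.le_max' s hs
  refine ⟨fun n hn T S' _ hS' _ i hi => indeg_union_of_forall_snd_ne fun e he => ?_, ?_⟩
  · rw [snd_eq_of_mem_NewE (hS' he)]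
    omega
  intro n1 n2 hn1 hn2 T1 T2 hT1 hT2 hcl S'' hsub
  have hA : ∀ s ∈ S'', s ≤ sbar := fun s hs => hmax s (hsub hs)
  have hprofile : ∀ i ≤ sbar, outdeg T1 (n1 - i) = outdeg T2 (n2 - i) :=
    fun i hi => hT1.outdeg_sub_eq_of_classif_snd_eq hT2 hcl hi
  refine ⟨?_, fun _ => ?_⟩
  · rw [hT1.union_image_iff (by omega) hsub hA, hT2.union_image_iff (by omega) hsub hA]
    exact ExtensionCondition.congr hA hprofile
  · rw [classif_snd_union_image hT1.1 (fun s hs => (hA s hs).trans (by omega)) (by omega),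
      classif_snd_union_image hT2.1 (fun s hs => (hA s hs).trans (by omega)) (by omega)]
    funext i
    rw [hprofile i i.isLt.le]
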